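/- arXiv:2203.01779 — 7 statements merged into one kernel-verified Lean document; each statement's English description precedes it below -/
import Mathlib

section
/- For any two bases A and B of a matroid and any element e in A \ B, there exists an element f in B \ A such that both A - e + f and B + e - f are bases (symmetric exchange property). -/
/-!
Let `C` be the fundamental circuit of `e` in `B + e` and `K` the fundamental cocircuit of `e`
for `A`, i.e. the cocircuit with `K ∩ A = {e}`. A circuit and a cocircuit never meet in exactly
one element, so `C ∩ K` contains some `f ≠ e`. Then `f ∈ B \ A`; `f ∈ C` says that `B + e - f`
is a base, and `f ∈ K` that `A - e + f` is one.
-/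

open Set

namespace Matroid

variable {α : Type*} {M : Matroid α} {A B : Set α} {e f : α}

lemma IsBase.isBase_insert_sdiff_of_mem_fundCircuit (hB : M.IsBase B) (heE : e ∈ M.E)
    (heB : e ∉ B) (hf : f ∈ M.fundCircuit e B) : M.IsBase (insert e B \ {f}) := by
  obtain rfl | hfe := eq_or_ne f e
  · rwa [insert_sdiff_self_of_notMem heB]
  have hfB : f ∈ B := by simpa [hfe] using M.fundCircuit_subset_insert e B hf
  refine hB.exchange_isBase_of_indep' hfB heB ?_
  rwa [← hB.indep.mem_fundCircuit_iff (by rwa [hB.closure_eq]) heB]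

lemma IsBase.isBase_insert_sdiff_of_mem_fundCocircuit (hA : M.IsBase A) (heA : e ∈ A)
    (hf : f ∈ M.fundCocircuit e A) : M.IsBase (insert f (A \ {e})) := by
  obtain rfl | hfe := eq_or_ne f e
  · rwa [insert_sdiff_singleton, insert_eq_of_mem heA]
  obtain ⟨hfE, hfA⟩ : f ∈ M.E \ A := by
    simpa [hfe] using M.fundCocircuit_subset_insert_compl e A hf
  rw [insert_sdiff_singleton_comm hfe]
  exact hA.isBase_insert_sdiff_of_mem_fundCircuit hfE hfA <|
    hA.mem_fundCocircuit_iff_mem_fundCircuit.1 hf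

lemma IsBase.exists_ne_mem_fundCircuit_inter_fundCocircuit (hA : M.IsBase A) (hB : M.IsBase B)
    (he : e ∈ A \ B) : ∃ f ∈ M.fundCircuit e B ∩ M.fundCocircuit e A, f ≠ e := by
  have hC := hB.fundCircuit_isCircuit (hA.subset_ground he.1) he.2
  have hK := M.fundCocircuit_isCocircuit he.1 hA
  exact (hC.isCocircuit_inter_nontrivial hK
    ⟨e, M.mem_fundCircuit e B, M.mem_fundCocircuit e A⟩).exists_ne e

end Matroid

open Matroid in
theorem symmetric_exchange_property {α : Type*} (M : Matroid α) (A B : Set α)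
    (hA : M.IsBase A) (hB : M.IsBase B) (e : α) (he : e ∈ A \ B) :
    ∃ f ∈ B \ A, M.IsBase (insert f (A \ {e})) ∧ M.IsBase ((insert e B) \ {f}) := by
  obtain ⟨f, ⟨hfC, hfK⟩, hfe⟩ := hA.exists_ne_mem_fundCircuit_inter_fundCocircuit hB he
  have hfB : f ∈ B := by simpa [hfe] using M.fundCircuit_subset_insert e B hfC
  obtain ⟨-, hfA⟩ : f ∈ M.E \ A := by
    simpa [hfe] using M.fundCocircuit_subset_insert_compl e A hfK
  exact ⟨f, ⟨hfB, hfA⟩, hA.isBase_insert_sdiff_of_mem_fundCocircuit he.1 hfK,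
    hB.isBase_insert_sdiff_of_mem_fundCircuit (hA.subset_ground he.1) he.2 hfC⟩
end

section
/- Let S be a finite set, r, r_1, …, r_q nonnegative integers, and H_1, …, H_q subsets of S with |S| ≥ r, satisfying |H_i ∩ H_j| ≤ r_i + r_j − r for all 1 ≤ i < j ≤ q and |S \ H_i| + r_i ≥ r for all i. Then the family I = {X ⊆ S : |X| ≤ r and |X ∩ H_i| ≤ r_i for all i} is the family of independent sets of a matroid of rank r. -/
/-!
Call an index `i` tight for `X` when `|X ∩ Hᵢ| ≥ rᵢ`. By `|Hᵢ ∩ Hⱼ| ≤ rᵢ + rⱼ - r`, an independent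
set of size `< r` has at most one tight index. So if no element of `Y \ X` can be added to an
independent `X` with `|X| < r`, all of `Y \ X` lies in the single tight `Hᵢ`, whence
`Y \ Hᵢ ⊆ X \ Hᵢ` and `|X| ≥ rᵢ + |Y \ Hᵢ|`. For `Y` independent the right side is at least
`|Y|`, which is augmentation; for `Y = S` it is at least `r` by `|S \ Hᵢ| + rᵢ ≥ r`, so maximal
independent sets have size `r`.
-/

open Set

theorem Set.ncard_inter_add_ncard_inter_le {α : Type*} {I A B : Set α} (hI : I.Finite)
    (hAB : (A ∩ B).Finite) : (I ∩ A).ncard + (I ∩ B).ncard ≤ I.ncard + (A ∩ B).ncard := by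
  rw [← ncard_union_add_ncard_inter _ _ (hI.subset inter_subset_left)
    (hI.subset inter_subset_left)]
  exact add_le_add (ncard_le_ncard (union_subset inter_subset_left inter_subset_left) hI)
    (ncard_le_ncard (fun x hx => ⟨hx.1.2, hx.2.2⟩) hAB)

theorem Set.ncard_sdiff_le_of_sdiff_subset {α : Type*} {X Y A : Set α} (hX : X.Finite)
    (h : Y \ X ⊆ A) : (Y \ A).ncard ≤ (X \ A).ncard :=
  ncard_le_ncard (fun _ hx => ⟨by_contra fun hxX => hx.2 (h ⟨hx.1, hxX⟩), hx.2⟩) hX.sdiff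

namespace ElementarySplit

variable {α ι : Type*}

def Indep (S : Set α) (r : ℕ) (H : ι → Set α) (rr : ι → ℕ) (X : Set α) : Prop :=
  X ⊆ S ∧ X.ncard ≤ r ∧ ∀ i, (X ∩ H i).ncard ≤ rr i

variable {S : Set α} {r : ℕ} {H : ι → Set α} {rr : ι → ℕ} {X Y : Set α}

theorem indep_empty : Indep S r H rr ∅ :=
  ⟨empty_subset S, by simp, fun i => by simp⟩

theorem Indep.subset (hS : S.Finite) (hY : Indep S r H rr Y) (hXY : X ⊆ Y) :
    Indep S r H rr X := by
  have hYfin : Y.Finite := hS.subset hY.1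
  exact ⟨hXY.trans hY.1, (ncard_le_ncard hXY hYfin).trans hY.2.1, fun i =>
    (ncard_le_ncard (inter_subset_inter_left _ hXY) (hYfin.subset inter_subset_left)).trans
      (hY.2.2 i)⟩

theorem eq_of_tight (hS : S.Finite) (hHS : ∀ i, H i ⊆ S)
    (hH : ∀ i j, i ≠ j → (H i ∩ H j).ncard + r ≤ rr i + rr j)
    (hXS : X ⊆ S) (hXr : X.ncard < r) {i j : ι}
    (hi : rr i ≤ (X ∩ H i).ncard) (hj : rr j ≤ (X ∩ H j).ncard) : i = j := by
  by_contra hij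
  have hij' := hH i j hij
  have := ncard_inter_add_ncard_inter_le (A := H i) (B := H j) (hS.subset hXS)
    (hS.subset (inter_subset_left.trans (hHS i)))
  omega

theorem exists_tight_of_not_indep_insert (hX : Indep S r H rr X) (hXr : X.ncard < r)
    {e : α} (he : e ∈ S) (hblock : ¬ Indep S r H rr (insert e X)) :
    ∃ i, e ∈ H i ∧ rr i ≤ (X ∩ H i).ncard := by
  simp only [Indep, insert_subset_iff, not_and, not_forall, not_le] at hblock
  obtain ⟨i, hi⟩ := hblock ⟨he, hX.1⟩ ((ncard_insert_le e X).trans hXr)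
  by_cases heH : e ∈ H i
  · rw [insert_inter_of_mem heH] at hi
    exact ⟨i, heH, Nat.lt_succ_iff.mp (hi.trans_le (ncard_insert_le _ _))⟩
  · rw [insert_inter_of_notMem heH] at hi
    exact absurd (hX.2.2 i) hi.not_ge

theorem exists_tight_of_forall_not_indep_insert (hS : S.Finite) (hHS : ∀ i, H i ⊆ S)
    (hH : ∀ i j, i ≠ j → (H i ∩ H j).ncard + r ≤ rr i + rr j)
    (hX : Indep S r H rr X) (hXr : X.ncard < r) (hYS : Y ⊆ S) (hne : (Y \ X).Nonempty)
    (hblock : ∀ e ∈ Y \ X, ¬ Indep S r H rr (insert e X)) :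
    ∃ i, Y \ X ⊆ H i ∧ rr i ≤ (X ∩ H i).ncard := by
  have htight : ∀ e ∈ Y \ X, ∃ i, e ∈ H i ∧ rr i ≤ (X ∩ H i).ncard := fun e he =>
    exists_tight_of_not_indep_insert hX hXr (hYS he.1) (hblock e he)
  obtain ⟨e₀, he₀⟩ := hne
  obtain ⟨i, -, hi⟩ := htight e₀ he₀
  refine ⟨i, fun e he => ?_, hi⟩
  obtain ⟨j, hej, hj⟩ := htight e he
  exact eq_of_tight hS hHS hH hX.1 hXr hj hi ▸ hej

theorem Indep.exists_insert_of_ncard_lt (hS : S.Finite) (hHS : ∀ i, H i ⊆ S)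
    (hH : ∀ i j, i ≠ j → (H i ∩ H j).ncard + r ≤ rr i + rr j)
    (hX : Indep S r H rr X) (hY : Indep S r H rr Y) (hlt : X.ncard < Y.ncard) :
    ∃ e ∈ Y, e ∉ X ∧ Indep S r H rr (insert e X) := by
  by_contra! hblock
  have hXfin : X.Finite := hS.subset hX.1
  obtain ⟨i, hsub, hi⟩ := exists_tight_of_forall_not_indep_insert hS hHS hH hX
    (hlt.trans_le hY.2.1) hY.1 (sdiff_nonempty_of_ncard_lt_ncard hlt hXfin)
    (fun e he => hblock e he.1 he.2)
  have hYi := hY.2.2 i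
  have hsdiff := ncard_sdiff_le_of_sdiff_subset hXfin hsub
  have hXsplit := ncard_inter_add_ncard_sdiff_eq_ncard X (H i) hXfin
  have hYsplit := ncard_inter_add_ncard_sdiff_eq_ncard Y (H i) (hS.subset hY.1)
  omega

theorem ncard_eq_of_maximal (hS : S.Finite) (hHS : ∀ i, H i ⊆ S)
    (hH : ∀ i j, i ≠ j → (H i ∩ H j).ncard + r ≤ rr i + rr j) (hSr : r ≤ S.ncard)
    (hcompl : ∀ i, r ≤ (S \ H i).ncard + rr i) (hX : Maximal (Indep S r H rr) X) :
    X.ncard = r := by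
  by_contra hne
  have hXfin : X.Finite := hS.subset hX.prop.1
  have hXr : X.ncard < r := lt_of_le_of_ne hX.prop.2.1 hne
  obtain ⟨i, hsub, hi⟩ := exists_tight_of_forall_not_indep_insert hS hHS hH hX.prop hXr
    subset_rfl (sdiff_nonempty_of_ncard_lt_ncard (hXr.trans_le hSr) hXfin)
    (fun e he hind => he.2 (hX.mem_of_prop_insert hind))
  have hSi := hcompl i
  have hsdiff := ncard_sdiff_le_of_sdiff_subset hXfin hsub
  have hXsplit := ncard_inter_add_ncard_sdiff_eq_ncard X (H i) hXfin
  omega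

def indepMatroid (hS : S.Finite) (hHS : ∀ i, H i ⊆ S)
    (hH : ∀ i j, i ≠ j → (H i ∩ H j).ncard + r ≤ rr i + rr j) : IndepMatroid α :=
  IndepMatroid.ofFinite hS (Indep S r H rr) indep_empty (fun _ _ hY hXY => hY.subset hS hXY)
    (fun _ _ hX hY hlt => hX.exists_insert_of_ncard_lt hS hHS hH hY hlt) (fun _ hX => hX.1)

end ElementarySplit

/-- If `|Hᵢ ∩ Hⱼ| ≤ rᵢ + rⱼ - r` (H1) and `|S \ Hᵢ| + rᵢ ≥ r` (H2), then
`{X ⊆ S : |X| ≤ r, |X ∩ Hᵢ| ≤ rᵢ}` is the independence family of a rank-`r` matroid. -/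
theorem elementary_split_is_matroid {α : Type*} (S : Set α) (hS : S.Finite)
    (r q : ℕ) (H : Fin q → Set α) (rr : Fin q → ℕ)
    (hHS : ∀ i, H i ⊆ S) (hSr : r ≤ S.ncard)
    (h1 : ∀ i j : Fin q, i < j → (H i ∩ H j).ncard + r ≤ rr i + rr j)
    (h2 : ∀ i : Fin q, r ≤ (S \ H i).ncard + rr i) :
    ∃ M : Matroid α, M.E = S ∧
      (∀ X : Set α, M.Indep X ↔ X ⊆ S ∧ X.ncard ≤ r ∧ ∀ i, (X ∩ H i).ncard ≤ rr i) ∧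
      (∀ B : Set α, M.IsBase B → B.ncard = r) := by
  have hH : ∀ i j, i ≠ j → (H i ∩ H j).ncard + r ≤ rr i + rr j := fun i j hij =>
    (lt_or_gt_of_ne hij).elim (h1 i j) fun hji => by
      simpa only [inter_comm, add_comm (rr j)] using h1 j i hji
  refine ⟨(ElementarySplit.indepMatroid hS hHS hH).matroid, rfl, fun X => Iff.rfl,
    fun B hB => ?_⟩
  exact ElementarySplit.ncard_eq_of_maximal hS hHS hH hSr h2
    (Matroid.isBase_iff_maximal_indep.mp hB)
end

section
/- Let M be a rank-r elementary split matroid with non-redundant representation by hyperedges H_1, …, H_q and bounds r_1, …, r_q. If F ⊆ S has |F| = r and F is both H_i-tight and H_j-tight for distinct indices i and j, then H_i ∩ H_j ⊆ F ⊆ H_i ∪ H_j. -/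
/-!
Counting `F ∩ Hᵢ` and `F ∩ Hⱼ` together counts `F ∩ (Hᵢ ∪ Hⱼ)` once and `F ∩ Hᵢ ∩ Hⱼ` twice,
so `rᵢ + rⱼ = |F ∩ (Hᵢ ∪ Hⱼ)| + |F ∩ Hᵢ ∩ Hⱼ| ≤ |F| + |Hᵢ ∩ Hⱼ| = r + |Hᵢ ∩ Hⱼ|`.
The representation axiom `|Hᵢ ∩ Hⱼ| + r ≤ rᵢ + rⱼ` forces equality in both estimates,
i.e. `F ⊆ Hᵢ ∪ Hⱼ` and `Hᵢ ∩ Hⱼ ⊆ F`.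
-/

namespace Set

variable {α : Type*} {F A B : Set α}

theorem ncard_inter_add_ncard_inter (hF : F.Finite) :
    (F ∩ A).ncard + (F ∩ B).ncard = (F ∩ (A ∪ B)).ncard + (F ∩ (A ∩ B)).ncard := by
  rw [inter_union_distrib_left, inter_inter_distrib_left,
    ncard_union_add_ncard_inter _ _ (hF.inter_of_left A) (hF.inter_of_left B)]

theorem inter_subset_and_subset_union_of_ncard_add_le (hF : F.Finite) (hAB : (A ∩ B).Finite)
    (h : F.ncard + (A ∩ B).ncard ≤ (F ∩ A).ncard + (F ∩ B).ncard) :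
    A ∩ B ⊆ F ∧ F ⊆ A ∪ B := by
  have hunion : (F ∩ (A ∪ B)).ncard ≤ F.ncard := ncard_inter_le_ncard_left _ _ hF
  have hinter : (F ∩ (A ∩ B)).ncard ≤ (A ∩ B).ncard := ncard_inter_le_ncard_right _ _ hAB
  rw [ncard_inter_add_ncard_inter hF] at h
  constructor
  · rw [← inter_eq_right]
    exact eq_of_subset_of_ncard_le inter_subset_right (by omega) hAB
  · rw [← inter_eq_left]
    exact eq_of_subset_of_ncard_le inter_subset_left (by omega) hF

end Set

theorem tight_two_hyperedges_general {α : Type*} (M : Matroid α) (hfin : M.E.Finite)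
    (r q : ℕ) (H : Fin q → Set α) (rr : Fin q → ℕ)
    (hHS : ∀ i, H i ⊆ M.E)
    (h1 : ∀ i j : Fin q, i < j → (H i ∩ H j).ncard + r ≤ rr i + rr j)
    (F : Set α) (hF : F ⊆ M.E) (hFcard : F.ncard = r)
    (i j : Fin q) (hij : i ≠ j)
    (htighti : (F ∩ H i).ncard = rr i) (htightj : (F ∩ H j).ncard = rr j) :
    H i ∩ H j ⊆ F ∧ F ⊆ H i ∪ H j := by
  have hHij : (H i ∩ H j).ncard + r ≤ rr i + rr j := by
    rcases hij.lt_or_gt with hlt | hgt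
    · exact h1 i j hlt
    · simpa only [Set.inter_comm, add_comm (rr j)] using h1 j i hgt
  exact Set.inter_subset_and_subset_union_of_ncard_add_le (hfin.subset hF)
    ((hfin.subset (hHS i)).inter_of_left _) (by omega)

/-- In a rank-`r` elementary split matroid with a non-redundant representation, a set `F` of
size `r` that is both `Hᵢ`- and `Hⱼ`-tight satisfies `Hᵢ ∩ Hⱼ ⊆ F ⊆ Hᵢ ∪ Hⱼ`. -/
theorem tight_two_hyperedges {α : Type*} (M : Matroid α) (hfin : M.E.Finite)
    (r q : ℕ) (H : Fin q → Set α) (rr : Fin q → ℕ)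
    (hHS : ∀ i, H i ⊆ M.E)
    (h1 : ∀ i j : Fin q, i < j → (H i ∩ H j).ncard + r ≤ rr i + rr j)
    (h2 : ∀ i : Fin q, r ≤ (M.E \ H i).ncard + rr i)
    (h3 : ∀ i : Fin q, rr i + 1 ≤ r)
    (h4 : ∀ i : Fin q, rr i + 1 ≤ (H i).ncard)
    (hInd : ∀ X : Set α, M.Indep X ↔ X ⊆ M.E ∧ X.ncard ≤ r ∧ ∀ i, (X ∩ H i).ncard ≤ rr i)
    (F : Set α) (hF : F ⊆ M.E) (hFcard : F.ncard = r)
    (i j : Fin q) (hij : i ≠ j)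
    (htighti : (F ∩ H i).ncard = rr i) (htightj : (F ∩ H j).ncard = rr j) :
    H i ∩ H j ⊆ F ∧ F ⊆ H i ∪ H j :=
  tight_two_hyperedges_general M hfin r q H rr hHS h1 F hF hFcard i j hij htighti htightj
end

section
/- In a uniform matroid of rank r, the exchange distance of any two compatible ordered basis pairs (A_1, A_2) and (B_1, B_2) is exactly r − |A_1 ∩ B_1|. -/
/-!
Each symmetric exchange changes the first set of the pair by one element, so reaching `B₁` from
`A₁` takes at least `|B₁ \ A₁| = r - |A₁ ∩ B₁|` exchanges. Conversely, for `e ∈ A₁ \ B₁` and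
`f ∈ B₁ \ A₁`, compatibility forces `e ∉ A₂` and `f ∈ A₂`; since every `r`-subset of the ground set
is a base of the uniform matroid, swapping `e` and `f` is a legal exchange, it keeps the pair
compatible with `(B₁, B₂)`, and it shrinks `B₁ \ A₁` by one element.
-/

/-- A symmetric exchange on an ordered pair of bases. -/
def SymExch {α : Type*} (M : Matroid α) (p p' : Set α × Set α) : Prop :=
  ∃ e ∈ p.1 \ p.2, ∃ f ∈ p.2 \ p.1,
    p'.1 = insert f (p.1 \ {e}) ∧ p'.2 = (insert e p.2) \ {f} ∧
    M.IsBase p'.1 ∧ M.IsBase p'.2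

/-- `ExchSeq M n p q` : there is a sequence of `n` symmetric exchanges from `p` to `q`. -/
def ExchSeq {α : Type*} (M : Matroid α) : ℕ → Set α × Set α → Set α × Set α → Prop
  | 0, p, q => p = q
  | n + 1, p, q => ∃ p', SymExch M p p' ∧ ExchSeq M n p' q

open Set

namespace Matroid

variable {α : Type*} {M : Matroid α}

theorem isBase_iff_ncard_eq_of_indep_iff {r : ℕ} (hfin : M.E.Finite) (hrn : r ≤ M.E.ncard)
    (hUnif : ∀ X : Set α, M.Indep X ↔ X ⊆ M.E ∧ X.ncard ≤ r) {B : Set α} :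
    M.IsBase B ↔ B ⊆ M.E ∧ B.ncard = r := by
  have ncard_eq {B : Set α} (hB : M.IsBase B) : B.ncard = r := by
    obtain ⟨hBE, hBr⟩ := (hUnif B).1 hB.indep
    refine hBr.antisymm (not_lt.1 fun hlt ↦ ?_)
    have hBfin : B.Finite := hfin.subset hBE
    obtain ⟨x, hxE, hxB⟩ : (M.E \ B).Nonempty :=
      sdiff_nonempty.2 fun hEB ↦ (ncard_le_ncard hEB hBfin).not_gt (hlt.trans_le hrn)
    refine (hB.insert_dep ⟨hxE, hxB⟩).not_indep ((hUnif _).2 ⟨insert_subset hxE hBE, ?_⟩)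
    rw [ncard_insert_of_notMem hxB hBfin]
    exact hlt
  refine ⟨fun hB ↦ ⟨hB.subset_ground, ncard_eq hB⟩, fun ⟨hBE, hBr⟩ ↦ ?_⟩
  obtain ⟨B', hB', hBB'⟩ := ((hUnif B).2 ⟨hBE, hBr.le⟩).exists_isBase_superset
  rwa [eq_of_subset_of_ncard_le hBB' (by rw [ncard_eq hB', hBr]) (hfin.subset hB'.subset_ground)]

end Matroid

section Exchange

variable {α : Type*} {M : Matroid α} {p p' q : Set α × Set α}

theorem SymExch.inter_eq (h : SymExch M p p') : p'.1 ∩ p'.2 = p.1 ∩ p.2 := by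
  obtain ⟨e, ⟨-, he⟩, f, ⟨-, hf⟩, h₁, h₂, -⟩ := h
  ext x
  rw [h₁, h₂]
  by_cases hxe : x = e <;> by_cases hxf : x = f <;> simp_all

theorem SymExch.union_eq (h : SymExch M p p') : p'.1 ∪ p'.2 = p.1 ∪ p.2 := by
  obtain ⟨e, ⟨he, -⟩, f, ⟨hf, -⟩, h₁, h₂, -⟩ := h
  ext x
  rw [h₁, h₂]
  by_cases hxe : x = e <;> by_cases hxf : x = f <;> simp_all

theorem SymExch.encard_diff_fst_le (h : SymExch M p p') (B : Set α) :
    (B \ p.1).encard ≤ (B \ p'.1).encard + 1 := by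
  obtain ⟨e, -, f, -, h₁, -⟩ := h
  have hsub : B \ p.1 ⊆ insert f (B \ p'.1) := by
    rintro x ⟨hxB, hxp⟩
    rw [h₁]
    by_cases hxf : x = f <;> simp_all
  exact (encard_le_encard hsub).trans (encard_insert_le _ _)

theorem ExchSeq.encard_diff_fst_le {n : ℕ} (h : ExchSeq M n p q) : (q.1 \ p.1).encard ≤ n := by
  induction n generalizing p with
  | zero => obtain rfl : p = q := h; simp
  | succ n ih =>
    obtain ⟨p', hpp', hp'q⟩ := h
    calc (q.1 \ p.1).encard ≤ (q.1 \ p'.1).encard + 1 := hpp'.encard_diff_fst_le q.1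
      _ ≤ n + 1 := by gcongr; exact ih hp'q
      _ = ↑(n + 1) := by norm_cast

end Exchange

section Compatible

variable {α : Type*} {M : Matroid α} {r : ℕ} {A₁ A₂ B₁ B₂ : Set α}

theorem symExch_of_compatible (hbase : ∀ B : Set α, M.IsBase B ↔ B ⊆ M.E ∧ B.ncard = r)
    (hA₁ : M.IsBase A₁) (hA₂ : M.IsBase A₂)
    (hcap : A₁ ∩ A₂ = B₁ ∩ B₂) (hcup : A₁ ∪ A₂ = B₁ ∪ B₂)
    {e f : α} (he : e ∈ A₁ \ B₁) (hf : f ∈ B₁ \ A₁) :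
    SymExch M (A₁, A₂) (insert f (A₁ \ {e}), insert e A₂ \ {f}) := by
  have heA₂ : e ∉ A₂ := fun heA₂ ↦ he.2 (hcap ▸ mem_inter he.1 heA₂).1
  have hfA₂ : f ∈ A₂ := (hcup ▸ mem_union_left B₂ hf.1 : f ∈ A₁ ∪ A₂).resolve_left hf.2
  refine ⟨e, ⟨he.1, heA₂⟩, f, ⟨hfA₂, hf.2⟩, rfl, rfl, (hbase _).2 ⟨?_, ?_⟩, (hbase _).2 ⟨?_, ?_⟩⟩
  · exact insert_subset (hA₂.subset_ground hfA₂) (sdiff_subset.trans hA₁.subset_ground)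
  · exact (ncard_exchange hf.2 he.1).trans ((hbase A₁).1 hA₁).2
  · exact sdiff_subset.trans (insert_subset (hA₁.subset_ground he.1) hA₂.subset_ground)
  · exact (ncard_exchange' heA₂ hfA₂).trans ((hbase A₂).1 hA₂).2

theorem exchSeq_of_compatible (hfin : M.E.Finite)
    (hbase : ∀ B : Set α, M.IsBase B ↔ B ⊆ M.E ∧ B.ncard = r)
    (hB₁ : M.IsBase B₁) (k : ℕ) (hA₁ : M.IsBase A₁) (hA₂ : M.IsBase A₂)
    (hcap : A₁ ∩ A₂ = B₁ ∩ B₂) (hcup : A₁ ∪ A₂ = B₁ ∪ B₂) (hk : (B₁ \ A₁).ncard = k) :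
    ExchSeq M k (A₁, A₂) (B₁, B₂) := by
  induction k generalizing A₁ A₂ with
  | zero =>
    have hB₁A₁ : B₁ ⊆ A₁ :=
      sdiff_eq_empty.1 ((ncard_eq_zero (hfin.subset hB₁.subset_ground).sdiff).1 hk)
    obtain rfl : B₁ = A₁ := hB₁.eq_of_subset_isBase hA₁ hB₁A₁
    obtain rfl : A₂ = B₂ := eq_of_inf_eq_sup_eq (a := B₁)
      (show A₂ ∩ B₁ = B₂ ∩ B₁ by rwa [inter_comm A₂, inter_comm B₂])
      (show A₂ ∪ B₁ = B₂ ∪ B₁ by rwa [union_comm A₂, union_comm B₂])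
    rfl
  | succ k ih =>
    obtain ⟨f, hf⟩ := nonempty_of_ncard_ne_zero (s := B₁ \ A₁) (by omega)
    obtain ⟨e, he⟩ : (A₁ \ B₁).Nonempty :=
      sdiff_nonempty.2 fun hA₁B₁ ↦ hf.2 (hA₁.eq_of_subset_isBase hB₁ hA₁B₁ ▸ hf.1)
    have hexch := symExch_of_compatible hbase hA₁ hA₂ hcap hcup he hf
    obtain ⟨-, -, -, -, -, -, hA₁', hA₂'⟩ := id hexch
    refine ⟨_, hexch, ih hA₁' hA₂' (hexch.inter_eq.trans hcap) (hexch.union_eq.trans hcup) ?_⟩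
    have hdiff : B₁ \ insert f (A₁ \ {e}) = (B₁ \ A₁) \ {f} := by
      ext x
      have hxe : x ∈ B₁ → x ≠ e := fun hx hxe ↦ he.2 (hxe ▸ hx)
      simp only [mem_sdiff, mem_insert_iff, mem_singleton_iff]
      tauto
    rw [hdiff, ncard_sdiff_singleton_of_mem hf, hk, Nat.add_sub_cancel]

end Compatible

theorem uniform_exchange_distance_general {α : Type*} (M : Matroid α) (hfin : M.E.Finite)
    (r : ℕ) (hrn : r ≤ M.E.ncard)
    (hUnif : ∀ X : Set α, M.Indep X ↔ X ⊆ M.E ∧ X.ncard ≤ r)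
    (A₁ A₂ B₁ B₂ : Set α)
    (hA₁ : M.IsBase A₁) (hA₂ : M.IsBase A₂) (hB₁ : M.IsBase B₁)
    (hcap : A₁ ∩ A₂ = B₁ ∩ B₂) (hcup : A₁ ∪ A₂ = B₁ ∪ B₂) :
    IsLeast {n : ℕ | ExchSeq M n (A₁, A₂) (B₁, B₂)} (r - (A₁ ∩ B₁).ncard) := by
  have hbase (B : Set α) := M.isBase_iff_ncard_eq_of_indep_iff hfin hrn hUnif (B := B)
  have hB₁fin : B₁.Finite := hfin.subset hB₁.subset_ground
  have hdist : (B₁ \ A₁).ncard = r - (A₁ ∩ B₁).ncard := by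
    have hsplit := ncard_inter_add_ncard_sdiff_eq_ncard B₁ A₁ hB₁fin
    rw [inter_comm, ((hbase B₁).1 hB₁).2] at hsplit
    omega
  refine ⟨exchSeq_of_compatible hfin hbase hB₁ _ hA₁ hA₂ hcap hcup hdist, fun n hn ↦ ?_⟩
  rw [← hdist, ← Nat.cast_le (α := ℕ∞), hB₁fin.sdiff.cast_ncard_eq]
  exact ExchSeq.encard_diff_fst_le hn

/-- In a uniform matroid of rank `r`, the exchange distance of any two compatible basis pairs
`(A₁, A₂)` and `(B₁, B₂)` is exactly `r - |A₁ ∩ B₁|`. -/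
theorem uniform_exchange_distance {α : Type*} (M : Matroid α) (hfin : M.E.Finite)
    (r : ℕ) (hrn : r ≤ M.E.ncard)
    (hUnif : ∀ X : Set α, M.Indep X ↔ X ⊆ M.E ∧ X.ncard ≤ r)
    (A₁ A₂ B₁ B₂ : Set α)
    (hA₁ : M.IsBase A₁) (hA₂ : M.IsBase A₂) (hB₁ : M.IsBase B₁) (hB₂ : M.IsBase B₂)
    (hcap : A₁ ∩ A₂ = B₁ ∩ B₂) (hcup : A₁ ∪ A₂ = B₁ ∪ B₂) :
    IsLeast {n : ℕ | ExchSeq M n (A₁, A₂) (B₁, B₂)} (r - (A₁ ∩ B₁).ncard) :=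
  uniform_exchange_distance_general M hfin r hrn hUnif A₁ A₂ B₁ B₂ hA₁ hA₂ hB₁ hcap hcup
end

section
/- If every matroid whose ground set can be partitioned into two bases is equitable, then for every matroid M on ground set S and every positive integer k such that S can be partitioned into k bases, for any X ⊆ S there is a partition of S into bases B_1, …, B_k with ⌊|X|/k⌋ ≤ |B_i ∩ X| ≤ ⌈|X|/k⌉ for each i. -/
open Set Matroid

private lemma ncard_biUnion_eq_sum {α ι : Type} [DecidableEq ι] (t : Finset ι) (s : ι → Set α)
    (hfin : ∀ i, (s i).Finite) (hdisj : ∀ i ∈ t, ∀ j ∈ t, i ≠ j → Disjoint (s i) (s j)) :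
    (⋃ i ∈ t, s i).ncard = ∑ i ∈ t, (s i).ncard := by
  induction t using Finset.induction with
  | empty => simp
  | @insert a t ha ih =>
      have hfint : (⋃ i ∈ t, s i).Finite :=
        Set.Finite.biUnion t.finite_toSet (fun i _ => hfin i)
      have hdt : Disjoint (s a) (⋃ i ∈ t, s i) := by
        rw [Set.disjoint_iUnion₂_right]
        exact fun i hi => hdisj a (Finset.mem_insert_self a t) i (Finset.mem_insert_of_mem hi)
          (fun h => ha (h ▸ hi))
      rw [Finset.set_biUnion_insert, Finset.sum_insert ha,
        Set.ncard_union_eq hdt (hfin a) hfint,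
        ih (fun i hi j hj hij => hdisj i (Finset.mem_insert_of_mem hi)
          j (Finset.mem_insert_of_mem hj) hij)]

/-- If every matroid whose ground set partitions into two bases is equitable (the 2-version),
then for every matroid whose ground set partitions into `k` bases and every `X ⊆ S` there is a
partition of `S` into `k` bases `B₁, …, B_k` with `⌊|X|/k⌋ ≤ |Bᵢ ∩ X| ≤ ⌈|X|/k⌉` for all `i`
(the `k`-version). -/
theorem two_equitable_implies_k_equitable
    (h2 : ∀ (α : Type) (M : Matroid α), M.E.Finite →
      (∃ B₀ : Set α, M.IsBase B₀ ∧ M.IsBase (M.E \ B₀)) →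
      ∀ X ⊆ M.E, ∃ B : Set α, M.IsBase B ∧ M.IsBase (M.E \ B) ∧
        X.ncard / 2 ≤ (B ∩ X).ncard ∧ (B ∩ X).ncard ≤ (X.ncard + 1) / 2) :
    ∀ (α : Type) (M : Matroid α), M.E.Finite → ∀ k : ℕ, 0 < k →
      ∀ B : Fin k → Set α, (∀ i, M.IsBase (B i)) →
        (Pairwise (Function.onFun Disjoint B)) → (⋃ i, B i) = M.E →
      ∀ X ⊆ M.E, ∃ C : Fin k → Set α, (∀ i, M.IsBase (C i)) ∧
        (Pairwise (Function.onFun Disjoint C)) ∧ (⋃ i, C i) = M.E ∧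
        ∀ i, X.ncard / k ≤ (C i ∩ X).ncard ∧ (C i ∩ X).ncard ≤ (X.ncard + k - 1) / k := by
  intro α M hfin k hk B₀ hB₀ hdisj₀ hunion₀ X hX
  have hXfin : X.Finite := hfin.subset hX
  suffices key : ∀ N : ℕ, ∀ B : Fin k → Set α, (∀ i, M.IsBase (B i)) →
      (Pairwise (Function.onFun Disjoint B)) → (⋃ i, B i) = M.E →
      (∑ i, ((B i ∩ X).ncard) ^ 2) ≤ N →
      ∃ C : Fin k → Set α, (∀ i, M.IsBase (C i)) ∧
        (Pairwise (Function.onFun Disjoint C)) ∧ (⋃ i, C i) = M.E ∧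
        ∀ i, X.ncard / k ≤ (C i ∩ X).ncard ∧ (C i ∩ X).ncard ≤ (X.ncard + k - 1) / k by
    exact key _ B₀ hB₀ hdisj₀ hunion₀ le_rfl
  intro N
  induction N using Nat.strong_induction_on with
  | _ N ih =>
  intro B hB hdisj hunion hmeas
  set v : Fin k → ℕ := fun i => (B i ∩ X).ncard with hv
  have hBfin : ∀ i, (B i ∩ X).Finite := fun i => hXfin.inter_of_right _
  by_cases hbal : ∀ a b : Fin k, v a ≤ v b + 1
  · -- balanced: done
    refine ⟨B, hB, hdisj, hunion, fun i => ?_⟩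
    have hsum : ∑ l, v l = X.ncard := by
      have h1 : (⋃ l ∈ (Finset.univ : Finset (Fin k)), B l ∩ X) = X := by
        simp only [Finset.mem_univ, Set.iUnion_true]
        rw [← Set.iUnion_inter, hunion, Set.inter_eq_self_of_subset_right hX]
      rw [← h1, ncard_biUnion_eq_sum _ _ hBfin (fun a _ b _ hab =>
        (hdisj hab).mono Set.inter_subset_left Set.inter_subset_left)]
    obtain ⟨k', rfl⟩ : ∃ k', k = k' + 1 := ⟨k - 1, by omega⟩
    set n := X.ncard with hn
    have hcard : (Finset.univ.erase i).card = k' := by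
      rw [Finset.card_erase_of_mem (Finset.mem_univ i)]; simp
    have hsplit : v i + ∑ l ∈ Finset.univ.erase i, v l = n := by
      rw [Finset.add_sum_erase _ v (Finset.mem_univ i), hsum]
    constructor
    · -- n / k ≤ v i
      show n / (k' + 1) ≤ v i
      have hub : ∑ l ∈ Finset.univ.erase i, v l ≤ k' * (v i + 1) := by
        calc ∑ l ∈ Finset.univ.erase i, v l ≤ ∑ _l ∈ Finset.univ.erase i, (v i + 1) :=
              Finset.sum_le_sum (fun l _ => hbal l i)
          _ = k' * (v i + 1) := by rw [Finset.sum_const, hcard, smul_eq_mul]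
      have hlt : n < (v i + 1) * (k' + 1) := by nlinarith
      have := (Nat.div_lt_iff_lt_mul (by omega : 0 < k' + 1)).mpr hlt
      omega
    · -- v i ≤ (n + k - 1) / k
      show v i ≤ (n + (k' + 1) - 1) / (k' + 1)
      rcases Nat.eq_zero_or_pos (v i) with h0 | h1
      · rw [h0]; exact Nat.zero_le _
      obtain ⟨m', hm'⟩ : ∃ m', v i = m' + 1 := ⟨v i - 1, by omega⟩
      have hlb : k' * m' ≤ ∑ l ∈ Finset.univ.erase i, v l := by
        calc k' * m' = ∑ _l ∈ Finset.univ.erase i, m' := by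
              rw [Finset.sum_const, hcard, smul_eq_mul]
          _ ≤ ∑ l ∈ Finset.univ.erase i, v l :=
              Finset.sum_le_sum (fun l _ => by have := hbal i l; omega)
      rw [Nat.le_div_iff_mul_le (by omega : 0 < k' + 1)]
      have hfin2 : (v i) * (k' + 1) ≤ n + k' := by nlinarith
      omega
  · -- unbalanced: rebalance the pair (i, j) with v i ≥ v j + 2
    push_neg at hbal
    obtain ⟨i, j, hij2⟩ : ∃ i j : Fin k, v j + 2 ≤ v i := by
      obtain ⟨a, b, hab⟩ := hbal; exact ⟨a, b, by omega⟩
    have hne : i ≠ j := by rintro rfl; omega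
    have hijd : Disjoint (B i) (B j) := hdisj hne
    set R : Set α := B i ∪ B j with hR
    have hRE : R ⊆ M.E := by
      rw [← hunion]
      exact Set.union_subset (Set.subset_iUnion B i) (Set.subset_iUnion B j)
    have hRfin : R.Finite := hfin.subset hRE
    have hbaseR : ∀ D : Set α, M.IsBase D → D ⊆ R → (M ↾ R).IsBase D := fun D hD hDR => by
      rw [Matroid.isBase_restrict_iff]; exact hD.isBasis_of_subset hRE hDR
    have hRdiff : R \ B i = B j := Set.union_diff_cancel_left (Set.disjoint_iff.mp hijd)
    obtain ⟨B', hB'b, hB'c, hB'low, hB'high⟩ :=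
      h2 α (M ↾ R) (by rw [Matroid.restrict_ground_eq]; exact hRfin)
        ⟨B i, hbaseR _ (hB i) Set.subset_union_left,
          by rw [Matroid.restrict_ground_eq, hRdiff]
             exact hbaseR _ (hB j) Set.subset_union_right⟩
        (X ∩ R) (by rw [Matroid.restrict_ground_eq]; exact Set.inter_subset_right)
    rw [Matroid.restrict_ground_eq] at hB'c
    have hB'R : B' ⊆ R := hB'b.subset_ground
    have hB'base : M.IsBase B' :=
      ((Matroid.isBase_restrict_iff hRE).mp hB'b).isBase_of_isBase_subset (hB i) Set.subset_union_left
    have hQbase : M.IsBase (R \ B') :=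
      ((Matroid.isBase_restrict_iff hRE).mp hB'c).isBase_of_isBase_subset (hB i) Set.subset_union_left
    classical
    set C : Fin k → Set α := fun l => if l = i then B' else if l = j then R \ B' else B l with hC
    have hCi : C i = B' := by simp [hC]
    have hCj : C j = R \ B' := by simp [hC, hne.symm]
    have hCo : ∀ l, l ≠ i → l ≠ j → C l = B l := fun l h1 h2 => by simp [hC, h1, h2]
    have hCbase : ∀ l, M.IsBase (C l) := fun l => by
      by_cases h1 : l = i
      · rw [h1, hCi]; exact hB'base
      by_cases h2 : l = j
      · rw [h2, hCj]; exact hQbase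
      · rw [hCo l h1 h2]; exact hB l
    have hCsub : ∀ l, C l ⊆ B l ∪ R := fun l => by
      by_cases h1 : l = i
      · rw [h1, hCi]; exact hB'R.trans Set.subset_union_right
      by_cases h2 : l = j
      · rw [h2, hCj]; exact Set.diff_subset.trans Set.subset_union_right
      · rw [hCo l h1 h2]; exact Set.subset_union_left
    have hdisjR : ∀ l, l ≠ i → l ≠ j → Disjoint R (B l) := fun l h1 h2 =>
      Set.disjoint_union_left.mpr ⟨hdisj h1.symm, hdisj h2.symm⟩
    have hCdisj : Pairwise (Function.onFun Disjoint C) := by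
      have keyd : ∀ a b : Fin k, a ≠ b → a ≠ i → a ≠ j → Disjoint (C a) (C b) := by
        intro a b hab h1 h2
        rw [hCo a h1 h2]
        exact Disjoint.mono_right (hCsub b) (Set.disjoint_union_right.mpr
          ⟨hdisj hab, (hdisjR a h1 h2).symm⟩)
      intro a b hab
      show Disjoint (C a) (C b)
      by_cases h1 : a = i
      · by_cases h2 : b = j
        · rw [h1, h2, hCi, hCj]; exact Set.disjoint_sdiff_right
        · by_cases h3 : b = i
          · exact absurd (h1.trans h3.symm) hab
          · exact (keyd b a (Ne.symm hab) h3 h2).symm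
      by_cases h2 : a = j
      · by_cases h3 : b = i
        · rw [h2, h3, hCj, hCi]; exact Set.disjoint_sdiff_left
        · by_cases h4 : b = j
          · exact absurd (h2.trans h4.symm) hab
          · exact (keyd b a (Ne.symm hab) h3 h4).symm
      · exact keyd a b hab h1 h2
    have hCunion : (⋃ l, C l) = M.E := by
      rw [← hunion]
      apply Set.Subset.antisymm
      · exact Set.iUnion_subset fun l => (hCsub l).trans (Set.union_subset
          (Set.subset_iUnion B l)
          (Set.union_subset (Set.subset_iUnion B i) (Set.subset_iUnion B j)))
      · refine Set.iUnion_subset fun l x hx => ?_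
        by_cases h1 : l = i
        · rw [h1] at hx
          by_cases hxB : x ∈ B'
          · exact Set.mem_iUnion.mpr ⟨i, by rw [hCi]; exact hxB⟩
          · exact Set.mem_iUnion.mpr ⟨j, by rw [hCj]; exact ⟨Set.subset_union_left hx, hxB⟩⟩
        by_cases h2 : l = j
        · rw [h2] at hx
          by_cases hxB : x ∈ B'
          · exact Set.mem_iUnion.mpr ⟨i, by rw [hCi]; exact hxB⟩
          · exact Set.mem_iUnion.mpr ⟨j, by rw [hCj]; exact ⟨Set.subset_union_right hx, hxB⟩⟩
        · exact Set.mem_iUnion.mpr ⟨l, by rw [hCo l h1 h2]; exact hx⟩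
    -- measure decreases
    set X' : Set α := X ∩ R with hX'
    have hX'fin : X'.Finite := hXfin.inter_of_left R
    set s := X'.ncard with hs
    set p := (B' ∩ X').ncard with hp
    have hBiX : B' ∩ X = B' ∩ X' := by
      ext x; constructor
      · rintro ⟨h1, h2⟩; exact ⟨h1, h2, hB'R h1⟩
      · rintro ⟨h1, h2, _⟩; exact ⟨h1, h2⟩
    have hps : p ≤ s := Set.ncard_le_ncard Set.inter_subset_right hX'fin
    have hsplits : s = v i + v j := by
      have h1 : X' = (B i ∩ X) ∪ (B j ∩ X) := by
        rw [hX', hR]; ext x; constructor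
        · rintro ⟨h1, h2 | h2⟩
          · exact Or.inl ⟨h2, h1⟩
          · exact Or.inr ⟨h2, h1⟩
        · rintro (⟨h1, h2⟩ | ⟨h1, h2⟩)
          · exact ⟨h2, Or.inl h1⟩
          · exact ⟨h2, Or.inr h1⟩
      rw [hs, h1, Set.ncard_union_eq (hijd.mono (Set.inter_subset_left)
        (Set.inter_subset_left)) (hBfin i) (hBfin j)]
    have hCiX : (C i ∩ X).ncard = p := by rw [hCi, hBiX]
    have hCjX : (C j ∩ X).ncard = s - p := by
      have h1 : C j ∩ X = X' \ (B' ∩ X') := by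
        rw [hCj]; ext x; constructor
        · rintro ⟨⟨h1, h2⟩, h3⟩; exact ⟨⟨h3, h1⟩, fun h => h2 h.1⟩
        · rintro ⟨⟨h1, h2⟩, h3⟩
          refine ⟨⟨h2, fun hb => h3 ⟨hb, h1, h2⟩⟩, h1⟩
      rw [h1, Set.ncard_diff (Set.inter_subset_right : B' ∩ X' ⊆ X') (hX'fin.inter_of_right B')]
    -- key inequality: p^2 + (s-p)^2 + 1 ≤ (v i)^2 + (v j)^2
    have hkey : p ^ 2 + (s - p) ^ 2 + 1 ≤ (v i) ^ 2 + (v j) ^ 2 := by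
      obtain ⟨q, hq, hpq, hpa, hpb, hqa, hqb⟩ :
          ∃ q, q = s - p ∧ p + q = v i + v j ∧ v j + 1 ≤ p ∧ p + 1 ≤ v i ∧
            v j + 1 ≤ q ∧ q + 1 ≤ v i :=
        ⟨s - p, rfl, by omega, by omega, by omega, by omega, by omega⟩
      rw [← hq]
      zify
      nlinarith [mul_nonneg
          (by omega : (0:ℤ) ≤ (p : ℤ) - ((v j : ℤ) + 1))
          (by omega : (0:ℤ) ≤ (v i : ℤ) - 1 - (p : ℤ)),
        mul_nonneg
          (by omega : (0:ℤ) ≤ (q : ℤ) - ((v j : ℤ) + 1))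
          (by omega : (0:ℤ) ≤ (v i : ℤ) - 1 - (q : ℤ)),
        (by omega : (p : ℤ) + (q : ℤ) = (v i : ℤ) + (v j : ℤ)),
        (by omega : ((v j : ℤ)) + 2 ≤ (v i : ℤ))]
    have hkey' : p ^ 2 + (s - p) ^ 2 + 1 ≤ ((B i ∩ X).ncard) ^ 2 + ((B j ∩ X).ncard) ^ 2 := hkey
    -- split sums over i, j
    have hsplitf : ∀ f : Fin k → ℕ, ∑ l, f l
        = f i + (f j + ∑ l ∈ (Finset.univ.erase i).erase j, f l) := by
      intro f
      rw [Finset.add_sum_erase _ f (Finset.mem_erase.mpr ⟨hne.symm, Finset.mem_univ j⟩),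
        Finset.add_sum_erase _ f (Finset.mem_univ i)]
    have hrest : ∑ l ∈ (Finset.univ.erase i).erase j, ((C l ∩ X).ncard) ^ 2
        = ∑ l ∈ (Finset.univ.erase i).erase j, ((B l ∩ X).ncard) ^ 2 := by
      refine Finset.sum_congr rfl fun l hl => ?_
      simp only [Finset.mem_erase, Finset.mem_univ] at hl
      rw [hCo l hl.2.1 hl.1]
    have hmeas' : (∑ l, ((C l ∩ X).ncard) ^ 2) < N := by
      have h1 := hsplitf (fun l => ((C l ∩ X).ncard) ^ 2)
      have h2' := hsplitf (fun l => ((B l ∩ X).ncard) ^ 2)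
      rw [h1, hCiX, hCjX, hrest]
      rw [h2'] at hmeas
      omega
    exact ih _ hmeas' C hCbase hCdisj hCunion le_rfl
end

section
/- If every basis pair satisfies the sequential symmetric exchange property in a matroid M, then the same holds in the dual matroid M*: White's conjecture for sequences of length two holds for M if and only if it holds for M*. -/
/-- White's conjecture for basis sequences of length two, for a matroid `M`: any two
compatible basis pairs can be transformed into each other by symmetric exchanges. -/
def WhiteTwo {α : Type*} (M : Matroid α) : Prop :=
  ∀ A₁ A₂ B₁ B₂ : Set α,
    M.IsBase A₁ → M.IsBase A₂ → M.IsBase B₁ → M.IsBase B₂ →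
    A₁ ∩ A₂ = B₁ ∩ B₂ → A₁ ∪ A₂ = B₁ ∪ B₂ →
    ∃ n : ℕ, ExchSeq M n (A₁, A₂) (B₁, B₂)

/-!
Complementation in the ground set maps bases of `M` to bases of `M✶` and, by De Morgan,
compatible basis pairs to compatible basis pairs. It also maps the symmetric exchange of
`e ∈ X₁` against `f ∈ X₂` to the symmetric exchange of `f ∈ E \ X₂` against `e ∈ E \ X₁`, so
an exchange sequence in `M` between complementary pairs becomes one in `M✶`. Since
`M✶✶ = M`, one implication suffices.
-/

open Set

lemma Set.sdiff_insert_sdiff_singleton {α : Type*} {E X : Set α} {e f : α} (he : e ∈ E)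
    (hef : e ≠ f) : E \ insert f (X \ {e}) = insert e ((E \ X) \ {f}) := by
  ext x
  by_cases hxe : x = e
  · subst hxe; simp [he, hef]
  · simp only [mem_sdiff, mem_insert_iff, mem_singleton_iff, hxe, false_or, not_or]
    tauto

lemma SymExch.compl_dual {α : Type*} {M : Matroid α} {p p' : Set α × Set α}
    (h : SymExch M p p') :
    SymExch M✶ (M.E \ p.1, M.E \ p.2) (M.E \ p'.1, M.E \ p'.2) := by
  obtain ⟨e, ⟨he₁, he₂⟩, f, ⟨hf₂, hf₁⟩, hp'₁, hp'₂, hB₁, hB₂⟩ := h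
  have hef : e ≠ f := by rintro rfl; exact he₂ hf₂
  have heE : e ∈ M.E := hB₂.subset_ground (by simp [hp'₂, hef])
  have hfE : f ∈ M.E := hB₁.subset_ground (by simp [hp'₁])
  refine ⟨f, by simp [hfE, hf₁, hf₂], e, by simp [heE, he₁, he₂], ?_, ?_,
    hB₁.compl_isBase_dual, hB₂.compl_isBase_dual⟩
  · dsimp only
    rw [hp'₁, sdiff_insert_sdiff_singleton heE hef]
  · dsimp only
    rw [hp'₂, ← insert_sdiff_singleton_comm hef, ← insert_sdiff_singleton_comm hef.symm,
      sdiff_insert_sdiff_singleton hfE hef.symm]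

lemma ExchSeq.compl_dual {α : Type*} {M : Matroid α} {n : ℕ} {p q : Set α × Set α}
    (h : ExchSeq M n p q) :
    ExchSeq M✶ n (M.E \ p.1, M.E \ p.2) (M.E \ q.1, M.E \ q.2) := by
  induction n generalizing p with
  | zero => cases h; rfl
  | succ n ih =>
    obtain ⟨p', hpp', hp'q⟩ := h
    exact ⟨_, hpp'.compl_dual, ih hp'q⟩

lemma WhiteTwo.dual {α : Type*} {M : Matroid α} (h : WhiteTwo M) : WhiteTwo M✶ := by
  intro A₁ A₂ B₁ B₂ hA₁ hA₂ hB₁ hB₂ hinter hunion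
  obtain ⟨n, hn⟩ := h _ _ _ _ hA₁.compl_isBase_of_dual hA₂.compl_isBase_of_dual
    hB₁.compl_isBase_of_dual hB₂.compl_isBase_of_dual
    (by rw [sdiff_inter_sdiff, sdiff_inter_sdiff, hunion])
    (by rw [← sdiff_inter, ← sdiff_inter, hinter])
  have ground_sdiff_sdiff {X : Set α} (hX : M✶.IsBase X) : M.E \ (M.E \ X) = X :=
    sdiff_sdiff_cancel_left hX.subset_ground
  refine ⟨n, ?_⟩
  simpa only [ground_sdiff_sdiff hA₁, ground_sdiff_sdiff hA₂, ground_sdiff_sdiff hB₁, ground_sdiff_sdiff hB₂]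
    using hn.compl_dual

/-- White's conjecture for sequences of length two holds for `M` iff it holds for the dual. -/
theorem whiteTwo_dual_iff {α : Type*} (M : Matroid α) : WhiteTwo M ↔ WhiteTwo M✶ :=
  ⟨WhiteTwo.dual, fun h => M.dual_dual ▸ h.dual⟩
end

section
/- If a matroid M admits a partition of its ground set into bases, then M is uniformly dense, i.e., r · |X| ≤ r_M(X) · |S| for every X ⊆ S, where r is the rank of M. -/
/-- The rank of a set `X` in a matroid `M`: the maximum size of an independent subset
of `X`. -/
noncomputable def mrank {α : Type*} (M : Matroid α) (X : Set α) : ℕ :=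
  sSup {n : ℕ | ∃ I ⊆ X, M.Indep I ∧ I.ncard = n}

/-!
Let `S = B₁ ∪ ⋯ ∪ B_k` be a partition into bases, so `|S| = k r`. For `X ⊆ S`, each
`X ∩ Bᵢ` is an independent subset of `X`, hence `|X| = ∑ |X ∩ Bᵢ| ≤ k r_M(X)`;
multiplying by `r` gives `r |X| ≤ r_M(X) · k r = r_M(X) |S|`.
-/

open Set

theorem ENat.sSup_setOf_coe_le (e : ℕ∞) : sSup {n : ℕ | (n : ℕ∞) ≤ e} = e.toNat := by
  induction e with
  | top => simp
  | coe m =>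
    simp only [Nat.cast_le, ENat.toNat_natCast]
    exact csSup_Iic

namespace Matroid

variable {α : Type*} {M : Matroid α} {X I B : Set α}

theorem setOf_ncard_indep_subset_eq (M : Matroid α) (X : Set α) :
    {n : ℕ | ∃ I ⊆ X, M.Indep I ∧ I.ncard = n} = {n : ℕ | (n : ℕ∞) ≤ M.eRk X} := by
  ext n
  simp only [mem_ofPred_eq, le_eRk_iff]
  constructor
  · rintro ⟨I, hIX, hI, rfl⟩
    obtain hfin | hinf := I.finite_or_infinite
    · exact ⟨I, hIX, hI, hfin.cast_ncard_eq.symm⟩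
    · exact ⟨∅, empty_subset X, M.empty_indep, by simp [hinf.ncard]⟩
  · rintro ⟨I, hIX, hI, hIn⟩
    exact ⟨I, hIX, hI, by rw [ncard_def, hIn, ENat.toNat_natCast]⟩

-- `ℕ`'s `sSup` of an unbounded set is `0`, matching `ENat.toNat ⊤ = 0` for infinite rank.
theorem mrank_eq_toNat_eRk (M : Matroid α) (X : Set α) : mrank M X = (M.eRk X).toNat := by
  rw [mrank, setOf_ncard_indep_subset_eq, ENat.sSup_setOf_coe_le]

theorem Indep.ncard_le_mrank (hI : M.Indep I) (hIX : I ⊆ X) (hX : M.IsRkFinite X) :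
    I.ncard ≤ mrank M X := by
  rw [mrank_eq_toNat_eRk, ncard_def]
  exact ENat.toNat_le_toNat (hI.encard_le_eRk_of_subset hIX) hX.eRk_lt_top.ne

theorem IsBase.ncard_eq_mrank_ground (hB : M.IsBase B) : B.ncard = mrank M M.E := by
  rw [mrank_eq_toNat_eRk, eRk_ground, ncard_def, hB.encard_eq_eRank]

theorem ncard_le_card_mul_mrank_of_subset_iUnion_indep {ι : Type*} [Fintype ι]
    {I : ι → Set α} (hI : ∀ i, M.Indep (I i)) (hX : M.IsRkFinite X) (hXI : X ⊆ ⋃ i, I i) :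
    X.ncard ≤ Fintype.card ι * mrank M X := by
  have hXeq : ⋃ i, X ∩ I i = X := by rw [← inter_iUnion, inter_eq_left.2 hXI]
  calc X.ncard = (⋃ i, X ∩ I i).ncard := by rw [hXeq]
    _ ≤ ∑ i, (X ∩ I i).ncard := ncard_iUnion_le_of_fintype _
    _ ≤ ∑ _i : ι, mrank M X := Finset.sum_le_sum fun i _ ↦
        ((hI i).subset inter_subset_right).ncard_le_mrank inter_subset_left hX
    _ = Fintype.card ι * mrank M X := by simp

theorem ncard_ground_eq_card_mul_mrank_of_partition_isBase [M.RankFinite] {ι : Type*}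
    [Fintype ι] {B : ι → Set α} (hB : ∀ i, M.IsBase (B i))
    (hdisj : Pairwise (Function.onFun Disjoint B))
    (hBE : ⋃ i, B i = M.E) : M.E.ncard = Fintype.card ι * mrank M M.E := by
  rw [← hBE, ncard_iUnion_of_finite (fun i ↦ (hB i).finite) hdisj, finsum_eq_sum_of_fintype,
    hBE, Finset.sum_congr rfl fun i _ ↦ (hB i).ncard_eq_mrank_ground]
  simp

end Matroid

/-- If the ground set of a matroid partitions into bases, then the matroid is uniformly
dense: `r ⬝ |X| ≤ r_M(X) ⬝ |S|` for all `X ⊆ S`, where `r` is the rank of `M`. -/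
theorem partition_into_bases_uniformly_dense {α : Type*} (M : Matroid α)
    (hfin : M.E.Finite)
    (hpart : ∃ (k : ℕ) (B : Fin k → Set α), (∀ i, M.IsBase (B i)) ∧
      Pairwise (Function.onFun Disjoint B) ∧ (⋃ i, B i) = M.E) :
    ∀ X ⊆ M.E, mrank M M.E * X.ncard ≤ mrank M X * M.E.ncard := by
  obtain ⟨k, B, hB, hdisj, hBE⟩ := hpart
  intro X hX
  have : M.Finite := ⟨hfin⟩
  have hXcard : X.ncard ≤ k * mrank M X := by
    simpa using Matroid.ncard_le_card_mul_mrank_of_subset_iUnion_indep (fun i ↦ (hB i).indep)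
      (Matroid.RankFinite.isRkFinite X) (hBE ▸ hX)
  have hEcard : M.E.ncard = k * mrank M M.E := by
    simpa using Matroid.ncard_ground_eq_card_mul_mrank_of_partition_isBase hB hdisj hBE
  calc mrank M M.E * X.ncard ≤ mrank M M.E * (k * mrank M X) := Nat.mul_le_mul_left _ hXcard
    _ = mrank M X * M.E.ncard := by rw [hEcard]; ring
end
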